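/- Let ρ be a continuous representation of SL(2,ℝ) on a finite-dimensional real vector space V, and let r ∈ ℝ with r ≠ 0. If v ∈ V⁻ and v ≠ 0, then q⁺(ρ(u_r)v) ≠ 0; equivalently, ρ(u_r)v ∉ V⁰ ⊕ V⁻. -/

import Mathlib

/-!
Suppose `w = ρ(u_r) v` had `q⁺ w = 0`, so that its forward orbit `aᵏ w` converges. Since
`aᵏ ℓ_s a⁻ᵏ = ℓ_{s α⁻²ᵏ} → 1` for the lower unipotent `ℓ_s = [[1,0],[s,1]]`, the vector
`p = ρ(ℓ_{-1/r}) w` has a convergent forward orbit as well. On the other hand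
`ℓ_{-1/r} u_r ℓ_{-1/r} = [[0,r],[-1/r,0]]` conjugates `a` to `a⁻¹`, and `p` is its image of
`ρ(ℓ_{1/r}) v ∈ V⁻`, so `p ∈ V⁺`. Finally `a⁻ᵏ → 0` uniformly on the finite-dimensional space
`V⁺`, which also contains the convergent sequence `aᵏ p`; hence `p = a⁻ᵏ (aᵏ p) → 0`, so `p = 0`
and `v = 0`.
-/

open Filter Topology

/-- `SL(2,ℝ)`. -/
abbrev SL2R := Matrix.SpecialLinearGroup (Fin 2) ℝ

/-- The element `a = diag(α, α⁻¹)` of `SL(2,ℝ)`, for `α > 1`. -/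
noncomputable def diagSL (α : ℝ) (hα : 1 < α) : SL2R :=
  ⟨!![α, 0; 0, α⁻¹], by
    have h0 : α ≠ 0 := by linarith
    simp [Matrix.det_fin_two_of, mul_inv_cancel₀ h0]⟩

/-- The unipotent element `u_r = [[1,r],[0,1]]` of `SL(2,ℝ)`. -/
def uSL (r : ℝ) : SL2R :=
  ⟨!![1, r; 0, 1], by simp [Matrix.det_fin_two_of]⟩

/-- Topology on `SL(2,ℝ)`, induced from the matrix entries. -/
noncomputable instance : TopologicalSpace SL2R :=
  TopologicalSpace.induced (fun g => (g : Matrix (Fin 2) (Fin 2) ℝ)) inferInstance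

section Spaces

variable {V : Type*} [NormedAddCommGroup V] [NormedSpace ℝ V]

/-- `V⁺ = {v : a^{−k} v → 0}` (with respect to `ρ` and `a`). -/
def Vplus (ρ : SL2R →* (V →ₗ[ℝ] V)) (a : SL2R) : Set V :=
  {v | Tendsto (fun k : ℕ => ((ρ a⁻¹) ^ k) v) atTop (𝓝 0)}

/-- `V⁰ = {v : a v = v}` (with respect to `ρ` and `a`). -/
def Vzero (ρ : SL2R →* (V →ₗ[ℝ] V)) (a : SL2R) : Set V :=
  {v | ρ a v = v}

/-- `V⁻ = {v : a^k v → 0}` (with respect to `ρ` and `a`). -/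
def Vminus (ρ : SL2R →* (V →ₗ[ℝ] V)) (a : SL2R) : Set V :=
  {v | Tendsto (fun k : ℕ => ((ρ a) ^ k) v) atTop (𝓝 0)}

end Spaces

theorem Filter.Tendsto.clm_apply {𝕜 E F ι : Type*} [NontriviallyNormedField 𝕜]
    [NormedAddCommGroup E] [NormedSpace 𝕜 E] [NormedAddCommGroup F] [NormedSpace 𝕜 F]
    {l : Filter ι} {f : ι → E →L[𝕜] F} {f₀ : E →L[𝕜] F} {x : ι → E} {x₀ : E}
    (hf : Tendsto f l (𝓝 f₀)) (hx : Tendsto x l (𝓝 x₀)) :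
    Tendsto (fun i ↦ f i (x i)) l (𝓝 (f₀ x₀)) :=
  (isBoundedBilinearMap_apply.continuous.tendsto _).comp (hf.prodMk_nhds hx)

section FiniteDimensional

variable {𝕜 E F : Type*} [NontriviallyNormedField 𝕜] [CompleteSpace 𝕜]
  [NormedAddCommGroup E] [NormedSpace 𝕜 E] [FiniteDimensional 𝕜 E]
  [NormedAddCommGroup F] [NormedSpace 𝕜 F]

theorem tendsto_clm_of_forall_tendsto_apply {ι : Type*} {l : Filter ι}
    {f : ι → E →L[𝕜] F} {f₀ : E →L[𝕜] F} (h : ∀ x, Tendsto (f · x) l (𝓝 (f₀ x))) :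
    Tendsto f l (𝓝 f₀) := by
  let e : (E →L[𝕜] F) ≃L[𝕜] Fin (Module.finrank 𝕜 E) → F :=
    ((ContinuousLinearEquiv.ofFinrankEq (Module.finrank_fin_fun 𝕜).symm).arrowCongr
      (1 : F ≃L[𝕜] F)).trans (ContinuousLinearEquiv.piRing _)
  rw [e.toHomeomorph.isInducing.tendsto_nhds_iff]
  exact tendsto_pi_nhds.2 fun i ↦ h _

theorem Filter.Tendsto.apply_of_continuous_apply {X ι : Type*} [TopologicalSpace X]
    {f : X → E →ₗ[𝕜] F} (hf : ∀ x, Continuous (f · x)) {l : Filter ι}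
    {g : ι → X} {g₀ : X} {x : ι → E} {x₀ : E}
    (hg : Tendsto g l (𝓝 g₀)) (hx : Tendsto x l (𝓝 x₀)) :
    Tendsto (fun i ↦ f (g i) (x i)) l (𝓝 (f g₀ x₀)) := by
  have hcont : Continuous fun y ↦ LinearMap.toContinuousLinearMap (f y) :=
    continuous_clm_apply.2 hf
  exact ((hcont.tendsto g₀).comp hg).clm_apply hx

end FiniteDimensional

namespace Module.End

def contractingSubmodule {R M : Type*} [Semiring R] [AddCommMonoid M] [Module R M]
    [TopologicalSpace M] [ContinuousAdd M] [ContinuousConstSMul R M] (T : Module.End R M) :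
    Submodule R M where
  carrier := {x | Tendsto (fun k : ℕ ↦ (T ^ k) x) atTop (𝓝 0)}
  add_mem' hx hy := by simpa using hx.add hy
  zero_mem' := by simpa using tendsto_const_nhds
  smul_mem' c _ hx := by simpa using hx.const_smul c

variable {𝕜 V : Type*} [NontriviallyNormedField 𝕜] [CompleteSpace 𝕜]
  [NormedAddCommGroup V] [NormedSpace 𝕜 V] [FiniteDimensional 𝕜 V]

theorem apply_mem_contractingSubmodule_of_commute {T S : Module.End 𝕜 V} (h : Commute T S)
    {x : V} (hx : x ∈ T.contractingSubmodule) : S x ∈ T.contractingSubmodule := by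
  have hS : Continuous S := LinearMap.continuous_of_finiteDimensional S
  have hSx := (hS.tendsto 0).comp hx
  rw [map_zero] at hSx
  refine hSx.congr fun k ↦ ?_
  rw [Function.comp_apply, ← Module.End.mul_apply, ← (h.pow_left k).eq, Module.End.mul_apply]

theorem eq_zero_of_tendsto_pow_apply {T S : Module.End 𝕜 V} (hTS : T * S = 1) {p y : V}
    (hT : Tendsto (fun k : ℕ ↦ (T ^ k) p) atTop (𝓝 0))
    (hS : Tendsto (fun k : ℕ ↦ (S ^ k) p) atTop (𝓝 y)) : p = 0 := by
  set P := T.contractingSubmodule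
  have hcomm : Commute T S := hTS.trans (mul_eq_one_comm.1 hTS).symm
  have hSp (k : ℕ) : (S ^ k) p ∈ P :=
    apply_mem_contractingSubmodule_of_commute (hcomm.pow_right k) hT
  have hy : y ∈ P :=
    P.closed_of_finiteDimensional.mem_of_tendsto hS (Eventually.of_forall hSp)
  let f (k : ℕ) : P →L[𝕜] V := LinearMap.toContinuousLinearMap ((T ^ k) ∘ₗ P.subtype)
  have hf : Tendsto f atTop (𝓝 0) :=
    tendsto_clm_of_forall_tendsto_apply fun x ↦ x.2
  have hfp (k : ℕ) : f k ⟨(S ^ k) p, hSp k⟩ = p := by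
    simp [f, ← Module.End.mul_apply, ← hcomm.mul_pow, hTS]
  have hSP : Tendsto (fun k ↦ (⟨(S ^ k) p, hSp k⟩ : P)) atTop (𝓝 ⟨y, hy⟩) :=
    tendsto_subtype_rng.2 hS
  have hlim := hf.clm_apply hSP
  simp only [hfp, zero_apply] at hlim
  exact tendsto_nhds_unique tendsto_const_nhds hlim

end Module.End

def lSL (s : ℝ) : SL2R :=
  ⟨!![1, 0; s, 1], by simp [Matrix.det_fin_two_of]⟩

@[simp]
theorem coe_lSL (s : ℝ) : (lSL s : Matrix (Fin 2) (Fin 2) ℝ) = !![1, 0; s, 1] := rfl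

@[simp]
theorem coe_uSL (r : ℝ) : (uSL r : Matrix (Fin 2) (Fin 2) ℝ) = !![1, r; 0, 1] := rfl

@[simp]
theorem coe_diagSL {α : ℝ} (hα : 1 < α) :
    (diagSL α hα : Matrix (Fin 2) (Fin 2) ℝ) = !![α, 0; 0, α⁻¹] := rfl

theorem lSL_zero : lSL 0 = 1 :=
  Subtype.ext (by simp [Matrix.one_fin_two])

theorem lSL_mul_lSL (s t : ℝ) : lSL s * lSL t = lSL (s + t) :=
  Subtype.ext (by simp)

theorem continuous_lSL : Continuous lSL :=
  continuous_induced_rng.2 (by fun_prop)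

theorem diagSL_mul_lSL {α : ℝ} (hα : 1 < α) (s : ℝ) :
    diagSL α hα * lSL s = lSL (s * (α ^ 2)⁻¹) * diagSL α hα := by
  have : α ≠ 0 := by positivity
  refine Subtype.ext ?_
  simp
  field_simp

theorem diagSL_pow_mul_lSL {α : ℝ} (hα : 1 < α) (s : ℝ) (k : ℕ) :
    diagSL α hα ^ k * lSL s = lSL (s * ((α ^ 2)⁻¹) ^ k) * diagSL α hα ^ k := by
  induction k with
  | zero => simp
  | succ k ih =>
    rw [pow_succ', mul_assoc, ih, ← mul_assoc, diagSL_mul_lSL, mul_assoc, ← pow_succ',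
      mul_assoc s, ← pow_succ]

theorem semiconjBy_weyl_diagSL {α : ℝ} (hα : 1 < α) {r : ℝ} (hr : r ≠ 0) :
    SemiconjBy (lSL (-r⁻¹) * uSL r * lSL (-r⁻¹)) (diagSL α hα) (diagSL α hα)⁻¹ := by
  have : α ≠ 0 := by positivity
  refine Subtype.ext ?_
  simp [Matrix.SpecialLinearGroup.coe_inv, Matrix.adjugate_fin_two_of]
  field_simp
  norm_num

theorem Module.End.pow_apply_of_apply_eq_self {R M : Type*} [Semiring R] [AddCommMonoid M]
    [Module R M] {T : Module.End R M} {x : M} (hx : T x = x) (k : ℕ) : (T ^ k) x = x := by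
  rw [Module.End.pow_apply, Function.iterate_fixed hx]

theorem MonoidHom.apply_eq_zero_iff {G R M : Type*} [Group G] [Semiring R] [AddCommMonoid M]
    [Module R M] (ρ : G →* Module.End R M) (g : G) {x : M} : ρ g x = 0 ↔ x = 0 := by
  refine ⟨fun h ↦ ?_, fun h ↦ by rw [h, map_zero]⟩
  rw [← Module.End.one_apply (R := R) x, ← map_one ρ, ← inv_mul_cancel g, map_mul, Module.End.mul_apply,
    h, map_zero]

section Representation

variable {V : Type*} [NormedAddCommGroup V] [NormedSpace ℝ V] [FiniteDimensional ℝ V]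
  (ρ : SL2R →* (V →ₗ[ℝ] V)) {α : ℝ} (hα : 1 < α)

theorem tendsto_pow_apply_lSL_apply (hρ : ∀ v : V, Continuous fun g ↦ ρ g v) (s : ℝ) {x y : V}
    (hx : Tendsto (fun k : ℕ ↦ (ρ (diagSL α hα) ^ k) x) atTop (𝓝 y)) :
    Tendsto (fun k : ℕ ↦ (ρ (diagSL α hα) ^ k) (ρ (lSL s) x)) atTop (𝓝 y) := by
  have hs : Tendsto (fun k : ℕ ↦ lSL (s * ((α ^ 2)⁻¹) ^ k)) atTop (𝓝 1) := by
    rw [← lSL_zero, ← mul_zero s]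
    refine (continuous_lSL.tendsto _).comp (tendsto_const_nhds.mul
      (tendsto_pow_atTop_nhds_zero_of_lt_one (by positivity) ?_))
    exact inv_lt_one_of_one_lt₀ (one_lt_pow₀ hα two_ne_zero)
  have h := hs.apply_of_continuous_apply hρ hx
  rw [map_one, Module.End.one_apply] at h
  refine h.congr fun k ↦ ?_
  symm
  rw [← map_pow, ← Module.End.mul_apply, ← map_mul, diagSL_pow_mul_lSL, map_mul, map_pow,
    Module.End.mul_apply]

theorem apply_mem_Vplus_of_semiconjBy {g a : SL2R} (h : SemiconjBy g a a⁻¹) {x : V}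
    (hx : x ∈ Vminus ρ a) : ρ g x ∈ Vplus ρ a := by
  have hg := ((LinearMap.continuous_of_finiteDimensional (ρ g)).tendsto 0).comp hx
  rw [map_zero] at hg
  refine hg.congr fun k ↦ ?_
  rw [Function.comp_apply, ← map_pow, ← map_pow, ← Module.End.mul_apply, ← Module.End.mul_apply,
    ← map_mul, ← map_mul, (h.pow_right k).eq]

theorem eq_zero_of_mem_Vplus_of_tendsto {a : SL2R} {p y : V} (hp : p ∈ Vplus ρ a)
    (hy : Tendsto (fun k : ℕ ↦ (ρ a ^ k) p) atTop (𝓝 y)) : p = 0 :=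
  Module.End.eq_zero_of_tendsto_pow_apply (by rw [← map_mul, inv_mul_cancel, map_one]) hp hy

theorem uSL_apply_notMem_Vzero_add_Vminus (hρ : ∀ v : V, Continuous fun g ↦ ρ g v) {r : ℝ}
    (hr : r ≠ 0) {v : V} (hv : v ∈ Vminus ρ (diagSL α hα)) (hv0 : v ≠ 0) :
    ¬ ∃ z ∈ Vzero ρ (diagSL α hα), ∃ m ∈ Vminus ρ (diagSL α hα), ρ (uSL r) v = z + m := by
  rintro ⟨z, hz, m, hm, hw⟩
  have horbit : Tendsto (fun k : ℕ ↦ (ρ (diagSL α hα) ^ k) (ρ (uSL r) v)) atTop (𝓝 z) := by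
    have hzm := (tendsto_const_nhds (x := z)).add hm
    rw [add_zero] at hzm
    refine hzm.congr fun k ↦ ?_
    rw [hw, map_add, Module.End.pow_apply_of_apply_eq_self hz]
  set p := ρ (lSL (-r⁻¹) * uSL r) v
  have hp_plus : p ∈ Vplus ρ (diagSL α hα) := by
    have hp : p = ρ (lSL (-r⁻¹) * uSL r * lSL (-r⁻¹)) (ρ (lSL r⁻¹) v) := by
      rw [← Module.End.mul_apply, ← map_mul, mul_assoc _ (lSL _), lSL_mul_lSL, neg_add_cancel,
        lSL_zero, mul_one]
    exact hp ▸ apply_mem_Vplus_of_semiconjBy ρ (semiconjBy_weyl_diagSL hα hr)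
      (tendsto_pow_apply_lSL_apply ρ hα hρ _ hv)
  have hp_orbit : Tendsto (fun k : ℕ ↦ (ρ (diagSL α hα) ^ k) p) atTop (𝓝 z) := by
    simpa only [p, map_mul, Module.End.mul_apply] using
      tendsto_pow_apply_lSL_apply ρ hα hρ (-r⁻¹) horbit
  exact hv0 ((ρ.apply_eq_zero_iff _).1 (eq_zero_of_mem_Vplus_of_tendsto ρ hp_plus hp_orbit))

end Representation

theorem stmt7_general
    {V : Type*} [NormedAddCommGroup V] [NormedSpace ℝ V] [FiniteDimensional ℝ V]
    (ρ : SL2R →* (V →ₗ[ℝ] V)) (hρ_cont : ∀ v : V, Continuous fun g => ρ g v)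
    {α : ℝ} (hα : 1 < α)
    (qp q0 qm : V →ₗ[ℝ] V)
    (hdecomp : ∀ v : V, qp v ∈ Vplus ρ (diagSL α hα) ∧ q0 v ∈ Vzero ρ (diagSL α hα) ∧
      qm v ∈ Vminus ρ (diagSL α hα) ∧ qp v + q0 v + qm v = v)
    {r : ℝ} (hr : r ≠ 0) (v : V) (hv : v ∈ Vminus ρ (diagSL α hα)) (hv0 : v ≠ 0) :
    qp (ρ (uSL r) v) ≠ 0 ∧
      ¬ ∃ z ∈ Vzero ρ (diagSL α hα), ∃ m ∈ Vminus ρ (diagSL α hα), ρ (uSL r) v = z + m := by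
  have h := uSL_apply_notMem_Vzero_add_Vminus ρ hα hρ_cont hr hv hv0
  obtain ⟨-, hz, hm, hsum⟩ := hdecomp (ρ (uSL r) v)
  refine ⟨fun hqp ↦ h ⟨_, hz, _, hm, ?_⟩, h⟩
  simpa [hqp] using hsum.symm

/-- if `v ∈ V⁻ \ {0}` and `r ≠ 0`, then `q⁺(ρ(u_r) v) ≠ 0`; equivalently
`ρ(u_r) v ∉ V⁰ ⊕ V⁻`.  The projections `q⁺, q⁰, q⁻` attached to the decomposition
`V = V⁺ ⊕ V⁰ ⊕ V⁻` are given as data together with their characterizing properties. -/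
theorem stmt7
    {V : Type*} [NormedAddCommGroup V] [NormedSpace ℝ V] [FiniteDimensional ℝ V]
    (ρ : SL2R →* (V →ₗ[ℝ] V)) (hρ_cont : ∀ v : V, Continuous fun g => ρ g v)
    {α : ℝ} (hα : 1 < α)
    (qp q0 qm : V →ₗ[ℝ] V)
    (hdecomp : ∀ v : V, qp v ∈ Vplus ρ (diagSL α hα) ∧ q0 v ∈ Vzero ρ (diagSL α hα) ∧
      qm v ∈ Vminus ρ (diagSL α hα) ∧ qp v + q0 v + qm v = v)
    (huniq : ∀ v p z m : V, p ∈ Vplus ρ (diagSL α hα) → z ∈ Vzero ρ (diagSL α hα) →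
      m ∈ Vminus ρ (diagSL α hα) → v = p + z + m → p = qp v ∧ z = q0 v ∧ m = qm v)
    {r : ℝ} (hr : r ≠ 0) (v : V) (hv : v ∈ Vminus ρ (diagSL α hα)) (hv0 : v ≠ 0) :
    qp (ρ (uSL r) v) ≠ 0 ∧
      ¬ ∃ z ∈ Vzero ρ (diagSL α hα), ∃ m ∈ Vminus ρ (diagSL α hα), ρ (uSL r) v = z + m :=
  stmt7_general ρ hρ_cont hα qp q0 qm hdecomp hr v hv hv0
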